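/- arXiv:2007.12097 — 6 statements merged into one kernel-verified Lean document; each statement's English description precedes it below -/
import Mathlib

section
/- For any two distinct subsets A, B of {1,...,n}, there exists a prime p with p ≤ C·√(n·log n) (for an absolute constant C) and a residue i with 0 ≤ i < p such that the number of elements of A congruent to i mod p differs from the number of elements of B congruent to i mod p. -/
/-!
If `A` and `B` have the same residue counts modulo `d`, then `X ^ d - 1` divides
`D = ∑_{a ∈ A} X ^ a - ∑_{b ∈ B} X ^ b`, hence so does the cyclotomic polynomial `Φ_d`. The
cyclotomic polynomials are pairwise coprime over `ℚ` and `D` is a nonzero polynomial of degree at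
most `n`, so if the counts agree for all primes `p ≤ N`, then `∑_{p ≤ N} (p - 1) ≤ n`.
Chebyshev's bounds give `θ N - θ (N / 8) ≥ N / 5`, so the primes in `(N / 8, N]` already make
`∑_{p ≤ N} (p - 1) ≫ N ^ 2 / log N`, which exceeds `n` once `N ≈ C √(n log n)`.
-/

open Polynomial Finset Real Chebyshev
open Nat (primesLE mem_primesLE prime_of_mem_primesLE le_of_mem_primesLE totient_prime)
open scoped Nat

section ResiduePolynomials

variable {R : Type*} [CommRing R]

theorem X_pow_sub_one_dvd_sum_X_pow_sub_sum_X_pow_mod (S : Finset ℕ) (d : ℕ) :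
    (X ^ d - 1 : R[X]) ∣ ∑ a ∈ S, X ^ a - ∑ a ∈ S, X ^ (a % d) := by
  rw [← sum_sub_distrib]
  refine dvd_sum fun a _ => ?_
  have h : (X : R[X]) ^ a - X ^ (a % d) = ((X ^ d) ^ (a / d) - 1 ^ (a / d)) * X ^ (a % d) := by
    rw [one_pow, sub_mul, one_mul, ← pow_mul, ← pow_add, Nat.div_add_mod]
  rw [h]
  exact (sub_dvd_pow_sub_pow _ _ _).mul_right _

theorem sum_comp_mod_eq_of_card_filter_mod_eq {M : Type*} [AddCommMonoid M] {A B : Finset ℕ}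
    {d : ℕ} (hd : 0 < d)
    (h : ∀ i < d, (A.filter (fun a => a % d = i)).card = (B.filter (fun a => a % d = i)).card)
    (f : ℕ → M) : ∑ a ∈ A, f (a % d) = ∑ a ∈ B, f (a % d) := by
  have fiberwise (S : Finset ℕ) :
      ∑ a ∈ S, f (a % d) = ∑ i ∈ range d, (S.filter (fun a => a % d = i)).card • f i := by
    rw [← sum_fiberwise_of_maps_to (g := (· % d)) fun a _ => mem_range.2 (Nat.mod_lt a hd)]
    refine sum_congr rfl fun i _ => ?_
    rw [← sum_const]
    exact sum_congr rfl fun a ha => by rw [(mem_filter.1 ha).2]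
  rw [fiberwise, fiberwise]
  exact sum_congr rfl fun i hi => by rw [h i (mem_range.1 hi)]

theorem X_pow_sub_one_dvd_sum_X_pow_sub_of_card_filter_mod_eq {A B : Finset ℕ} {d : ℕ}
    (hd : 0 < d)
    (h : ∀ i < d, (A.filter (fun a => a % d = i)).card = (B.filter (fun a => a % d = i)).card) :
    (X ^ d - 1 : R[X]) ∣ ∑ a ∈ A, X ^ a - ∑ a ∈ B, X ^ a := by
  have hA := X_pow_sub_one_dvd_sum_X_pow_sub_sum_X_pow_mod (R := R) A d
  rw [sum_comp_mod_eq_of_card_filter_mod_eq hd h] at hA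
  simpa using dvd_sub hA (X_pow_sub_one_dvd_sum_X_pow_sub_sum_X_pow_mod B d)

theorem sum_X_pow_sub_sum_X_pow_ne_zero [Nontrivial R] {A B : Finset ℕ} (hAB : A ≠ B) :
    ∑ a ∈ A, (X : R[X]) ^ a - ∑ a ∈ B, X ^ a ≠ 0 := by
  rw [sub_ne_zero]
  intro h
  apply hAB
  ext k
  have hk := congrArg (coeff · k) h
  simp only [finsetSum_coeff, coeff_X_pow, sum_ite_eq] at hk
  by_cases hkA : k ∈ A <;> by_cases hkB : k ∈ B <;> simp_all

theorem natDegree_sum_X_pow_le {S : Finset ℕ} {n : ℕ} (hS : ∀ a ∈ S, a ≤ n) :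
    (∑ a ∈ S, (X : R[X]) ^ a).natDegree ≤ n :=
  natDegree_sum_le_of_forall_le S _ fun a ha => (natDegree_X_pow_le a).trans (hS a ha)

end ResiduePolynomials

theorem sum_totient_le_natDegree_of_X_pow_sub_one_dvd {D : ℚ[X]} (hD : D ≠ 0) {S : Finset ℕ}
    (h : ∀ d ∈ S, (X ^ d - 1 : ℚ[X]) ∣ D) : ∑ d ∈ S, φ d ≤ D.natDegree := by
  have hprod : ∏ d ∈ S, cyclotomic d ℚ ∣ D :=
    prod_dvd_of_coprime (fun _ _ _ _ hde => cyclotomic.isCoprime_rat hde)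
      fun d hd => (cyclotomic.dvd_X_pow_sub_one d ℚ).trans (h d hd)
  calc ∑ d ∈ S, φ d = (∏ d ∈ S, cyclotomic d ℚ).natDegree := by
        rw [natDegree_prod _ _ fun d _ => cyclotomic_ne_zero d ℚ]
        exact sum_congr rfl fun d _ => (natDegree_cyclotomic d ℚ).symm
    _ ≤ D.natDegree := natDegree_le_of_dvd hprod hD

theorem sum_totient_le_of_card_filter_mod_eq {A B : Finset ℕ} {n : ℕ}
    (hA : ∀ a ∈ A, a ≤ n) (hB : ∀ b ∈ B, b ≤ n) (hAB : A ≠ B) {S : Finset ℕ}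
    (hS : ∀ d ∈ S, 0 < d ∧ ∀ i < d,
      (A.filter (fun a => a % d = i)).card = (B.filter (fun a => a % d = i)).card) :
    ∑ d ∈ S, φ d ≤ n := by
  calc ∑ d ∈ S, φ d ≤ (∑ a ∈ A, (X : ℚ[X]) ^ a - ∑ b ∈ B, X ^ b).natDegree :=
        sum_totient_le_natDegree_of_X_pow_sub_one_dvd (sum_X_pow_sub_sum_X_pow_ne_zero hAB)
          fun d hd => X_pow_sub_one_dvd_sum_X_pow_sub_of_card_filter_mod_eq (hS d hd).1 (hS d hd).2
    _ ≤ n := (natDegree_sub_le _ _).trans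
        (max_le (natDegree_sum_X_pow_le hA) (natDegree_sum_X_pow_le hB))

theorem sqrt_mul_log_le_div {x : ℝ} (hx : 2 ^ 24 ≤ x) : √x * log x ≤ x / 16 := by
  set s := √√x with hs_def
  have hx0 : 0 ≤ x := by positivity
  have hs : 64 ≤ s := by
    rw [hs_def, le_sqrt (by norm_num) (sqrt_nonneg x), le_sqrt (by norm_num) hx0]
    linarith
  have hsx : √x = s ^ 2 := (sq_sqrt (sqrt_nonneg x)).symm
  have hxs : x = s ^ 4 := by rw [← sq_sqrt hx0, hsx]; ring
  have hlog : log x = 4 * log s := by rw [hxs, log_pow]; norm_num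
  have hlogs := log_le_self (x := s) (by linarith)
  rw [hsx, hlog, hxs]
  have hs3 : s ^ 2 * (4 * log s) ≤ 4 * s ^ 3 := by nlinarith [sq_nonneg s]
  nlinarith [pow_pos (by linarith : (0 : ℝ) < s) 3]

theorem mul_theta_sub_theta_le {m N : ℕ} (hmN : m ≤ N) :
    m * (θ N - θ m) ≤ (∑ p ∈ primesLE N, (φ p : ℝ)) * log N := by
  have hsplit : θ N - θ m = ∑ p ∈ primesLE N with m < p, log p := by
    have hm : primesLE m = {p ∈ primesLE N | ¬ m < p} := by
      ext p
      simp only [mem_primesLE, mem_filter]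
      exact ⟨fun ⟨hpm, hp⟩ => ⟨⟨hpm.trans hmN, hp⟩, by omega⟩,
        fun ⟨⟨_, hp⟩, hpm⟩ => ⟨by omega, hp⟩⟩
    rw [theta_eq_sum_primesLE_log, theta_eq_sum_primesLE_log, hm,
      ← sum_filter_add_sum_filter_not (primesLE N) (m < ·)]
    ring
  rw [hsplit, mul_sum, sum_mul]
  calc ∑ p ∈ primesLE N with m < p, (m : ℝ) * log p
      ≤ ∑ p ∈ primesLE N with m < p, (φ p : ℝ) * log N := by
        refine sum_le_sum fun p hp => ?_
        obtain ⟨hpN, hmp⟩ := mem_filter.1 hp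
        have hp := prime_of_mem_primesLE hpN
        have hmφ : (m : ℝ) ≤ φ p := by
          rw [totient_prime hp]
          exact_mod_cast Nat.le_sub_one_of_lt hmp
        have hlog : log p ≤ log N :=
          log_le_log (by exact_mod_cast hp.pos) (by exact_mod_cast le_of_mem_primesLE hpN)
        exact mul_le_mul hmφ hlog (log_natCast_nonneg p) (by positivity)
    _ ≤ ∑ p ∈ primesLE N, (φ p : ℝ) * log N :=
        sum_le_sum_of_subset_of_nonneg (filter_subset _ _) fun _ _ _ => by positivity

theorem sq_le_sum_totient_primesLE_mul_log {N : ℕ} (hN : 2 ^ 24 ≤ N) :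
    (N : ℝ) ^ 2 ≤ 50 * (∑ p ∈ primesLE N, (φ p : ℝ)) * log N := by
  have hNr : (2 : ℝ) ^ 24 ≤ N := by exact_mod_cast hN
  have hθN := theta_ge' (x := N) (by linarith)
  have hθm := theta_le_log4_mul_x (x := (N / 8 : ℕ)) (by positivity)
  have hθ := mul_theta_sub_theta_le (Nat.div_le_self N 8)
  have hsqrt_log := sqrt_mul_log_le_div hNr
  have hlog2 := log_two_gt_d9
  have hlog4 : log 4 = 2 * log 2 := by
    rw [show (4 : ℝ) = 2 ^ 2 by norm_num, log_pow]; norm_num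
  have hlogN : 0 ≤ log N := log_natCast_nonneg N
  have hlog_add_two : log (N + 2) ≤ N / 8 := by
    have h1 : log (N + 2) ≤ 2 * log N := by
      rw [show 2 * log N = log ((N : ℝ) ^ 2) by rw [log_pow]; norm_num]
      exact log_le_log (by positivity) (by nlinarith)
    have h2 : log N ≤ √N * log N :=
      le_mul_of_one_le_left hlogN (one_le_sqrt.2 (by linarith))
    linarith
  have hm_le : ((N / 8 : ℕ) : ℝ) ≤ N / 8 := Nat.cast_div_le
  have hm_ge : (N : ℝ) / 8 - 1 ≤ ((N / 8 : ℕ) : ℝ) := by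
    have : N < 8 * (N / 8) + 8 := by omega
    have : (N : ℝ) < 8 * ((N / 8 : ℕ) : ℝ) + 8 := by exact_mod_cast this
    linarith
  have hgap : (N : ℝ) / 5 ≤ θ N - θ ((N / 8 : ℕ) : ℝ) := by nlinarith
  nlinarith

theorem lt_sum_totient_primesLE_floor {n : ℕ} (hn : 2 ≤ n) :
    (n : ℝ) < ∑ p ∈ primesLE ⌊2 ^ 24 * √(n * log n)⌋₊, (φ p : ℝ) := by
  set x := 2 ^ 24 * √(n * log n)
  set N := ⌊x⌋₊
  have hn2 : (2 : ℝ) ≤ n := by exact_mod_cast hn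
  have hlog2 := log_two_gt_d9
  have hlogn : log 2 ≤ log n := log_le_log (by norm_num) hn2
  have hnlogn : 1 ≤ n * log n := by nlinarith
  have hsqrt_ge : 1 ≤ √(n * log n) := one_le_sqrt.2 hnlogn
  have hsqrt_le : √(n * log n) ≤ n :=
    (sqrt_le_left (by positivity)).2 (by nlinarith [log_le_self (x := n) (by positivity)])
  have hx_sq : x ^ 2 = 2 ^ 48 * (n * log n) := by
    rw [mul_pow, sq_sqrt (by positivity)]; norm_num
  have hNx : (N : ℝ) ≤ x := Nat.floor_le (by positivity)
  have hxN : x < N + 1 := Nat.lt_floor_add_one x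
  have hN : 2 ^ 24 ≤ N := Nat.le_floor (by push_cast; nlinarith)
  have hNpos : (0 : ℝ) < N := by exact_mod_cast (by omega : 0 < N)
  have hlogN : log N ≤ 25 * log n := by
    have hlog_x : log x ≤ log (2 ^ 24 * n) := log_le_log (by positivity) (by nlinarith)
    have hlog_mul : log (2 ^ 24 * n) = 24 * log 2 + log n := by
      rw [log_mul (by positivity) (by positivity), log_pow]; norm_num
    linarith [log_le_log hNpos hNx]
  have hsum := sq_le_sum_totient_primesLE_mul_log hN
  by_contra! hS
  have : (N : ℝ) ^ 2 ≤ 1250 * (n * log n) := by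
    nlinarith [log_nonneg (by linarith : (1 : ℝ) ≤ N)]
  nlinarith

theorem stmt0 : ∃ C : ℝ, 0 < C ∧ ∀ n : ℕ, 2 ≤ n → ∀ A B : Finset ℕ,
    A ⊆ Finset.Icc 1 n → B ⊆ Finset.Icc 1 n → A ≠ B →
    ∃ p : ℕ, Nat.Prime p ∧ (p : ℝ) ≤ C * Real.sqrt (n * Real.log n) ∧
      ∃ i < p, (A.filter (fun a => a % p = i)).card ≠ (B.filter (fun a => a % p = i)).card := by
  refine ⟨2 ^ 24, by positivity, fun n hn A B hA hB hAB => ?_⟩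
  by_contra! h
  have hS := sum_totient_le_of_card_filter_mod_eq (fun a ha => (mem_Icc.1 (hA ha)).2)
    (fun b hb => (mem_Icc.1 (hB hb)).2) hAB
    (S := primesLE ⌊2 ^ 24 * √(n * log n)⌋₊) fun p hp =>
      ⟨(prime_of_mem_primesLE hp).pos, h p (prime_of_mem_primesLE hp)
        ((Nat.cast_le.2 (le_of_mem_primesLE hp)).trans (Nat.floor_le (by positivity)))⟩
  exact (lt_sum_totient_primesLE_floor hn).not_ge (by exact_mod_cast hS)
end

section
/- Let A, B ⊆ {1,...,n} be distinct, and suppose that for every prime p ≤ k and every residue i ∈ {0,...,p-1}, the sets A and B have the same number of elements congruent to i mod p. Then the polynomial f(x) = Σ_{j=1}^n (1_A(j) − 1_B(j))·x^j is divisible by the product of the cyclotomic polynomials Φ_p(x) over all primes p ≤ k. -/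
/-!
Reducing exponents mod `p` shows `∑_{a ∈ A} x^a ≡ ∑_{i < p} #{a ∈ A | a ≡ i} x^i` modulo
`x^p - 1`, so equal residue counts give `X^p - 1 ∣ f`, hence `Φ_p ∣ f`. Distinct cyclotomic
polynomials over `ℤ` are irreducible and monic, hence pairwise relatively prime, so their
product divides `f` as well.
-/

open Finset Polynomial

theorem pow_sub_one_dvd_pow_sub_pow_mod {R : Type*} [CommRing R] (x : R) (p n : ℕ) :
    x ^ p - 1 ∣ x ^ n - x ^ (n % p) := by
  have hsplit : x ^ n - x ^ (n % p) = x ^ (n % p) * ((x ^ p) ^ (n / p) - 1) := by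
    rw [mul_sub, mul_one, ← pow_mul, ← pow_add, Nat.mod_add_div]
  rw [hsplit]
  exact (sub_one_dvd_pow_sub_one _ _).mul_left _

theorem sum_pow_mod_eq_sum_card_filter_mod {R : Type*} [CommRing R] (x : R) {p : ℕ} (hp : 0 < p)
    (A : Finset ℕ) :
    ∑ a ∈ A, x ^ (a % p) = ∑ i ∈ range p, (#{a ∈ A | a % p = i} : R) * x ^ i := by
  rw [← sum_fiberwise_of_maps_to (g := (· % p)) (t := range p)
    fun a _ => mem_range.mpr (Nat.mod_lt a hp)]
  refine sum_congr rfl fun i _ => ?_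
  rw [sum_congr rfl fun a ha => by rw [(mem_filter.mp ha).2], sum_const, nsmul_eq_mul]

theorem pow_sub_one_dvd_sum_pow_sub_sum_pow {R : Type*} [CommRing R] (x : R) {p : ℕ} (hp : 0 < p)
    {A B : Finset ℕ} (h : ∀ i < p, #{a ∈ A | a % p = i} = #{b ∈ B | b % p = i}) :
    x ^ p - 1 ∣ ∑ a ∈ A, x ^ a - ∑ b ∈ B, x ^ b := by
  have hres : ∑ a ∈ A, x ^ (a % p) = ∑ b ∈ B, x ^ (b % p) := by
    rw [sum_pow_mod_eq_sum_card_filter_mod x hp, sum_pow_mod_eq_sum_card_filter_mod x hp]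
    exact sum_congr rfl fun i hi => by rw [h i (mem_range.mp hi)]
  have hsplit : ∑ a ∈ A, x ^ a - ∑ b ∈ B, x ^ b =
      ∑ a ∈ A, (x ^ a - x ^ (a % p)) - ∑ b ∈ B, (x ^ b - x ^ (b % p)) := by
    simp only [sum_sub_distrib, hres]
    ring
  rw [hsplit]
  exact dvd_sub (dvd_sum fun a _ => pow_sub_one_dvd_pow_sub_pow_mod x p a)
    (dvd_sum fun b _ => pow_sub_one_dvd_pow_sub_pow_mod x p b)

theorem cyclotomic_isRelPrime {n m : ℕ} (hnm : n ≠ m) :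
    IsRelPrime (cyclotomic n ℤ) (cyclotomic m ℤ) := by
  rcases Nat.eq_zero_or_pos m with rfl | hm
  · simpa using isRelPrime_one_right
  rcases Nat.eq_zero_or_pos n with rfl | hn
  · simpa using isRelPrime_one_left
  refine (cyclotomic.irreducible hn).isRelPrime_iff_not_dvd.mpr fun hdvd => hnm ?_
  obtain hunit | hassoc := (cyclotomic.irreducible hm).dvd_iff.mp hdvd
  · exact absurd hunit (cyclotomic.irreducible hn).not_isUnit
  exact cyclotomic_injective
    (eq_of_monic_of_associated (cyclotomic.monic m ℤ) (cyclotomic.monic n ℤ) hassoc).symm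

theorem sum_C_indicator_sub_indicator_mul_X_pow {R : Type*} [CommRing R] {s A B : Finset ℕ}
    (hA : A ⊆ s) (hB : B ⊆ s) :
    ∑ j ∈ s, C ((if j ∈ A then (1 : R) else 0) - (if j ∈ B then (1 : R) else 0)) * X ^ j =
      ∑ a ∈ A, (X : R[X]) ^ a - ∑ b ∈ B, X ^ b := by
  simp only [map_sub, sub_mul, apply_ite C, map_one, map_zero, ite_mul, one_mul, zero_mul,
    sum_sub_distrib, sum_ite_mem, inter_eq_right.mpr hA, inter_eq_right.mpr hB]

open Polynomial in
theorem stmt1_general (n k : ℕ) (A B : Finset ℕ) (hA : A ⊆ Finset.Icc 1 n) (hB : B ⊆ Finset.Icc 1 n)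
    (h : ∀ p : ℕ, Nat.Prime p → p ≤ k →
      ∀ i < p, (A.filter (fun a => a % p = i)).card = (B.filter (fun a => a % p = i)).card) :
    (∏ p ∈ (Finset.range (k+1)).filter Nat.Prime, Polynomial.cyclotomic p ℤ) ∣
      ∑ j ∈ Finset.Icc 1 n,
        Polynomial.C ((if j ∈ A then (1:ℤ) else 0) - (if j ∈ B then (1:ℤ) else 0)) * Polynomial.X ^ j := by
  rw [sum_C_indicator_sub_indicator_mul_X_pow hA hB]
  refine prod_dvd_of_isRelPrime (fun p _ q _ hpq => cyclotomic_isRelPrime hpq) fun p hp => ?_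
  obtain ⟨hpk, hprime⟩ := mem_filter.mp hp
  exact (cyclotomic.dvd_X_pow_sub_one p ℤ).trans <|
    pow_sub_one_dvd_sum_pow_sub_sum_pow X hprime.pos
      (h p hprime (Nat.lt_succ_iff.mp (mem_range.mp hpk)))

open Polynomial in
theorem stmt1 (n k : ℕ) (A B : Finset ℕ) (hA : A ⊆ Finset.Icc 1 n) (hB : B ⊆ Finset.Icc 1 n)
    (hAB : A ≠ B)
    (h : ∀ p : ℕ, Nat.Prime p → p ≤ k →
      ∀ i < p, (A.filter (fun a => a % p = i)).card = (B.filter (fun a => a % p = i)).card) :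
    (∏ p ∈ (Finset.range (k+1)).filter Nat.Prime, Polynomial.cyclotomic p ℤ) ∣
      ∑ j ∈ Finset.Icc 1 n,
        Polynomial.C ((if j ∈ A then (1:ℤ) else 0) - (if j ∈ B then (1:ℤ) else 0)) * Polynomial.X ^ j :=
  stmt1_general n k A B hA hB h
end

section
/- Suppose f(x) = Σ_{j=0}^n a_j x^j is a polynomial with complex coefficients satisfying |a_j| ≤ 1 for all j, and suppose (x−1)^k divides f(x). Then for all real x with 1 − k/(9n) ≤ x ≤ 1, we have |f(x)| ≤ (n+1)·(e/9)^k. -/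
/-!
Write `f = (X - 1)^k g`. Since `(X - 1) g` has coefficients `g_{j-1} - g_j`, each coefficient of
`g` is minus a partial sum of those of `(X - 1) g`; iterating `k` times bounds `|g_j|` by
`C(j + k, k)`, so the hockey-stick identity gives `|g(x)| ≤ C(n + 1, k + 1)` on `[0, 1]`. On the
interval `(1 - x) n ≤ k / 9`, and `C(n + 1, k + 1) ≤ (n + 1) n^k / k!` together with
`k^k / k! ≤ e^k` finishes the estimate.
-/

open Polynomial Finset Nat

namespace Polynomial

variable {R : Type*}

theorem coeff_eq_neg_sum_coeff_X_sub_one_mul [Ring R] (g : R[X]) (j : ℕ) :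
    g.coeff j = -∑ i ∈ range (j + 1), ((X - 1) * g).coeff i := by
  induction j with
  | zero => simp [sub_mul]
  | succ j ih =>
    rw [sum_range_succ, neg_add, ← ih, sub_mul, one_mul, coeff_sub, coeff_X_mul]
    abel

theorem norm_coeff_le_mul_choose_of_X_sub_one_pow_mul [SeminormedRing R] {M : ℝ} (k : ℕ)
    (g : R[X]) (h : ∀ j, ‖((X - 1) ^ k * g).coeff j‖ ≤ M) (j : ℕ) :
    ‖g.coeff j‖ ≤ M * (j + k).choose k := by
  induction k generalizing g j with
  | zero => simpa using h j
  | succ k ih =>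
    have hXg : ∀ i, ‖((X - 1) * g).coeff i‖ ≤ M * (i + k).choose k :=
      ih _ fun i ↦ by simpa only [← mul_assoc, ← pow_succ] using h i
    calc ‖g.coeff j‖ ≤ ∑ i ∈ range (j + 1), ‖((X - 1) * g).coeff i‖ := by
          rw [coeff_eq_neg_sum_coeff_X_sub_one_mul, norm_neg]
          exact norm_sum_le _ _
      _ ≤ ∑ i ∈ range (j + 1), M * (i + k).choose k := sum_le_sum fun i _ ↦ hXg i
      _ = M * (j + (k + 1)).choose (k + 1) := by
          rw [← mul_sum, ← Nat.cast_sum, sum_range_add_choose, add_assoc]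

theorem norm_eval_le_sum_norm_coeff [NormedRing R] [NormOneClass R] (p : R[X]) {x : R}
    (hx : ‖x‖ ≤ 1) : ‖p.eval x‖ ≤ ∑ i ∈ range (p.natDegree + 1), ‖p.coeff i‖ := by
  rw [eval_eq_sum_range]
  refine (norm_sum_le _ _).trans (sum_le_sum fun i _ ↦ ?_)
  calc ‖p.coeff i * x ^ i‖ ≤ ‖p.coeff i‖ * ‖x‖ ^ i := norm_mul_le_of_le le_rfl (norm_pow_le _ _)
    _ ≤ ‖p.coeff i‖ := mul_le_of_le_one_right (norm_nonneg _) (pow_le_one₀ (norm_nonneg _) hx)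

theorem norm_eval_le_choose_of_X_sub_one_pow_mul [NormedRing R] [NormOneClass R] {k : ℕ}
    (g : R[X]) (h : ∀ j, ‖((X - 1) ^ k * g).coeff j‖ ≤ 1) {x : R} (hx : ‖x‖ ≤ 1) :
    ‖g.eval x‖ ≤ (g.natDegree + k + 1).choose (k + 1) := by
  calc ‖g.eval x‖ ≤ ∑ i ∈ range (g.natDegree + 1), ‖g.coeff i‖ :=
        norm_eval_le_sum_norm_coeff g hx
    _ ≤ ∑ i ∈ range (g.natDegree + 1), ((i + k).choose k : ℝ) := sum_le_sum fun i _ ↦ by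
          simpa using norm_coeff_le_mul_choose_of_X_sub_one_pow_mul k g h i
    _ = (g.natDegree + k + 1).choose (k + 1) := by rw [← Nat.cast_sum, sum_range_add_choose]

end Polynomial

theorem Nat.add_one_choose_add_one_le_mul_pow_div {α : Type*} [Semifield α] [LinearOrder α]
    [IsStrictOrderedRing α] (n k : ℕ) :
    ((n + 1).choose (k + 1) : α) ≤ (n + 1) * n ^ k / k ! := by
  calc ((n + 1).choose (k + 1) : α) ≤ (n + 1) * n.choose k := by
        norm_cast
        rw [add_one_mul_choose_eq]
        exact Nat.le_mul_of_pos_right _ k.succ_pos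
    _ ≤ (n + 1) * n ^ k / k ! := by
        rw [mul_div_assoc]
        gcongr
        exact choose_le_pow_div k n

theorem pow_mul_choose_le_of_mul_le {n k : ℕ} {t c : ℝ} (ht : 0 ≤ t) (hc : 0 < c)
    (htn : t * n ≤ k / c) :
    t ^ k * (n + 1).choose (k + 1) ≤ (n + 1) * (Real.exp 1 / c) ^ k := by
  calc t ^ k * (n + 1).choose (k + 1) ≤ t ^ k * ((n + 1) * n ^ k / k !) := by
        gcongr
        exact add_one_choose_add_one_le_mul_pow_div n k
    _ = (n + 1) * (t * n) ^ k / k ! := by ring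
    _ ≤ (n + 1) * (k / c) ^ k / k ! := by gcongr
    _ = (n + 1) * ((k : ℝ) ^ k / k !) / c ^ k := by ring
    _ ≤ (n + 1) * Real.exp k / c ^ k := by
        gcongr
        exact Real.pow_div_factorial_le_exp _ k.cast_nonneg k
    _ = (n + 1) * (Real.exp 1 / c) ^ k := by rw [div_pow, ← Real.exp_one_pow]; ring

theorem stmt3_general (n k : ℕ) (f : Polynomial ℂ) (hdeg : f.natDegree ≤ n)
    (hcoeff : ∀ j, ‖f.coeff j‖ ≤ 1) (hdvd : (Polynomial.X - 1) ^ k ∣ f) :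
    ∀ x : ℝ, 1 - (k : ℝ) / (9 * n) ≤ x → x ≤ 1 →
      ‖f.eval (x : ℂ)‖ ≤ (n + 1) * (Real.exp 1 / 9) ^ k := by
  intro x hx1 hx2
  rcases eq_or_ne f 0 with rfl | hf
  · simp only [eval_zero, norm_zero]
    positivity
  obtain ⟨g, rfl⟩ := hdvd
  have hgdeg : g.natDegree + k + 1 ≤ n + 1 := by
    rw [natDegree_mul (left_ne_zero_of_mul hf) (right_ne_zero_of_mul hf), natDegree_pow,
      ← C_1, natDegree_X_sub_C] at hdeg
    omega
  have hkn : (k : ℝ) ≤ 9 * n := by norm_cast; omega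
  have hx0 : 0 ≤ x := by linarith [div_le_one_of_le₀ hkn (by positivity)]
  have hnorm_x : ‖(x : ℂ)‖ ≤ 1 := by rwa [Complex.norm_real, Real.norm_of_nonneg hx0]
  have hnorm_sub : ‖(x : ℂ) - 1‖ = 1 - x := by
    rw [norm_sub_rev, ← Complex.ofReal_one, ← Complex.ofReal_sub, Complex.norm_real,
      Real.norm_of_nonneg (by linarith)]
  have hmul : (1 - x) * n ≤ k / 9 := by
    rcases n.eq_zero_or_pos with rfl | hn
    · simp only [CharP.cast_eq_zero, mul_zero]
      positivity
    have := (le_div_iff₀ (by positivity : (0 : ℝ) < 9 * n)).1 (by linarith : 1 - x ≤ k / (9 * n))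
    linarith
  calc ‖((X - 1) ^ k * g).eval (x : ℂ)‖ = (1 - x) ^ k * ‖g.eval (x : ℂ)‖ := by
        simp only [eval_mul, eval_pow, eval_sub, eval_X, eval_one, norm_mul, norm_pow, hnorm_sub]
    _ ≤ (1 - x) ^ k * (n + 1).choose (k + 1) := by
        gcongr _ * ?_
        refine (norm_eval_le_choose_of_X_sub_one_pow_mul g hcoeff hnorm_x).trans ?_
        exact_mod_cast choose_le_choose _ hgdeg
    _ ≤ (n + 1) * (Real.exp 1 / 9) ^ k :=
        pow_mul_choose_le_of_mul_le (by linarith) (by norm_num) hmul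

theorem stmt3 (n k : ℕ) (hn : 0 < n) (f : Polynomial ℂ) (hdeg : f.natDegree ≤ n)
    (hcoeff : ∀ j, ‖f.coeff j‖ ≤ 1) (hdvd : (Polynomial.X - 1) ^ k ∣ f) :
    ∀ x : ℝ, 1 - (k : ℝ) / (9 * n) ≤ x → x ≤ 1 →
      ‖f.eval (x : ℂ)‖ ≤ (n + 1) * (Real.exp 1 / 9) ^ k :=
  stmt3_general n k f hdeg hcoeff hdvd
end

section
/- If a and b are integers with a ≠ b, |a| ≤ N, and |b| ≤ N, then there exists a prime p ≤ C·log N (for an absolute constant C, and N sufficiently large) such that a ≢ b (mod p). -/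
/-!
If `a ≡ b` modulo every prime `p ≤ x`, then the primorial of `⌊x⌋₊` divides `a - b ≠ 0`,
so `log |a - b| ≥ θ x`. Chebyshev's lower bound `θ x ≥ (log 2 / 2) x` for large `x` makes
this impossible once `x = 8 log N` and `|a - b| ≤ 2N`.
-/

open Real Filter Asymptotics Chebyshev

theorem Nat.primorial_dvd_of_forall_prime_le_dvd {n d : ℕ}
    (h : ∀ p, p.Prime → p ≤ n → p ∣ d) : primorial n ∣ d :=
  Finset.prod_primes_dvd d (fun _ hp ↦ (Nat.mem_primesLE.1 hp).2.prime)
    fun _ hp ↦ h _ (Nat.mem_primesLE.1 hp).2 (Nat.mem_primesLE.1 hp).1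

theorem Chebyshev.eventually_log_two_div_two_mul_le_theta :
    ∀ᶠ x in atTop, log 2 / 2 * x ≤ θ x := by
  have hlog_shift : (fun x ↦ log (x + 2)) =o[atTop] id :=
    (isLittleO_log_id_atTop.comp_tendsto (tendsto_atTop_add_const_right _ 2 tendsto_id))
      |>.trans_isBigO ((isBigO_refl id _).add (isLittleO_const_id_atTop (2 : ℝ)).isBigO)
  have hsqrt_log : (fun x ↦ 2 * √x * log x) =o[atTop] id := by
    have := ((isBigO_refl (fun x : ℝ ↦ x ^ (1 / 2 : ℝ)) atTop).const_mul_left 2).mul_isLittleO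
      (isLittleO_log_rpow_atTop (r := 1 / 2) (by norm_num))
    refine (this.congr_left fun x ↦ by rw [sqrt_eq_rpow]).congr' EventuallyEq.rfl ?_
    filter_upwards [eventually_ge_atTop 0] with x hx
    rw [← rpow_add' hx (by norm_num)]
    norm_num
  have herror : (fun x ↦ log 2 + log (x + 2) + 2 * √x * log x) =o[atTop] id :=
    ((isLittleO_const_id_atTop _).add hlog_shift).add hsqrt_log
  filter_upwards [herror.bound (c := log 2 / 2) (by positivity), eventually_ge_atTop 1]
    with x hx hx1
  rw [Real.norm_eq_abs, id, Real.norm_of_nonneg (by linarith)] at hx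
  linarith [le_abs_self (log 2 + log (x + 2) + 2 * √x * log x), theta_ge' hx1]

theorem Int.exists_prime_le_not_modEq_of_abs_sub_lt_primorial {n : ℕ} {a b : ℤ} (hab : a ≠ b)
    (h : |a - b| < primorial n) : ∃ p : ℕ, p.Prime ∧ p ≤ n ∧ ¬ a ≡ b [ZMOD p] := by
  by_contra! hmod
  have hdvd : primorial n ∣ (a - b).natAbs := Nat.primorial_dvd_of_forall_prime_le_dvd
    fun p hp hpn ↦ Int.natCast_dvd.1 (hmod p hp hpn).symm.dvd
  have hle := Nat.le_of_dvd (Int.natAbs_pos.2 (sub_ne_zero.2 hab)) hdvd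
  rw [Int.abs_eq_natAbs] at h
  omega

-- `θ (8 log N) ≥ 4 log 2 · log N`, and `4 log 2 > 2` beats `log (2N) = log 2 + log N`.
theorem eventually_two_mul_lt_primorial_floor_eight_mul_log :
    ∀ᶠ N : ℕ in atTop, 2 * N < primorial ⌊8 * log N⌋₊ := by
  have hlog : Tendsto (fun N : ℕ ↦ log N) atTop atTop :=
    tendsto_log_atTop.comp tendsto_natCast_atTop_atTop
  filter_upwards [(hlog.const_mul_atTop (by norm_num : (0 : ℝ) < 8)).eventually
    eventually_log_two_div_two_mul_le_theta, hlog.eventually_ge_atTop 1] with N hθ hN1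
  have hN : 0 < N := Nat.pos_of_ne_zero fun hN0 ↦ by simp [hN0] at hN1; linarith
  rw [← Nat.cast_lt (α := ℝ), ← log_lt_log_iff (by simp [hN]) (by simp [primorial_pos]),
    ← theta_eq_log_primorial]
  push_cast
  rw [log_mul two_ne_zero (by simp [hN.ne'])]
  nlinarith [log_two_gt_d9, log_two_lt_d9]

theorem stmt7 : ∃ C : ℝ, 0 < C ∧ ∃ N₀ : ℕ, 2 ≤ N₀ ∧ ∀ N : ℕ, N₀ ≤ N → ∀ a b : ℤ,
    a ≠ b → |a| ≤ N → |b| ≤ N →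
    ∃ p : ℕ, Nat.Prime p ∧ (p : ℝ) ≤ C * Real.log N ∧ ¬ (a ≡ b [ZMOD p]) := by
  obtain ⟨N₀, hN₀⟩ :=
    eventually_atTop.1 eventually_two_mul_lt_primorial_floor_eight_mul_log
  refine ⟨8, by norm_num, max N₀ 2, le_max_right _ _, fun N hN a b hab ha hb ↦ ?_⟩
  have hab_lt : |a - b| < primorial ⌊8 * log N⌋₊ := calc
    |a - b| ≤ |a| + |b| := abs_sub _ _
    _ ≤ 2 * N := by linarith
    _ < _ := by exact_mod_cast hN₀ N (le_of_max_le_left hN)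
  obtain ⟨p, hp, hpN, hpab⟩ :=
    Int.exists_prime_le_not_modEq_of_abs_sub_lt_primorial hab hab_lt
  exact ⟨p, hp, (Nat.cast_le.2 hpN).trans (Nat.floor_le (by positivity)), hpab⟩
end

section
/- For all sufficiently large n, there exist distinct subsets A, B of {1,...,n}, each n^{1/3}-separated, such that |A_{i,p}| = |B_{i,p}| for every prime p ≤ c·n^{1/3}·(log n)^{1/2} and every residue i ∈ {0,...,p−1}, where c > 0 is an absolute constant. -/
/-!
Split `[1, n]` into `m ≈ n^{2/3} / 2` blocks of length `2d`, `d = ⌈n^{1/3}⌉`, and pick one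
point among the first `d` of each block: this gives `d^m` distinct `d`-separated sets. The
residue counts of such a set modulo all primes `p ≤ K` form a vector of `∑_{p ≤ K} p` numbers
in `[0, m]`, so by pigeonhole two of the sets share it as soon as `(m + 1)^{∑ p} < d^m`, which
holds once `3 ∑_{p ≤ K} p < m` since `m < d³`. By Chebyshev's bound `θ(K) ≤ K log 4` there
are only `O(K / log n)` primes above `n^{1/6}`, so `∑_{p ≤ K} p = O(K² / log n)`, which is
below `m / 3` for `K = n^{1/3} √(log n) / 10`.
-/

open Finset Real

def IsSeparated (δ : ℝ) (A : Finset ℕ) : Prop :=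
  ∀ a ∈ A, ∀ a' ∈ A, a ≠ a' → δ ≤ |(a : ℝ) - (a' : ℝ)|

theorem IsSeparated.mono {δ δ' : ℝ} {A : Finset ℕ} (h : IsSeparated δ A) (hδ : δ' ≤ δ) :
    IsSeparated δ' A :=
  fun a ha a' ha' hne => hδ.trans (h a ha a' ha' hne)

theorem exists_ne_card_filter_mod_eq {𝒜 : Finset (Finset ℕ)} {m : ℕ} (P : Finset ℕ)
    (hm : ∀ A ∈ 𝒜, #A ≤ m) (hcard : (m + 1) ^ (∑ p ∈ P, p) < #𝒜) :
    ∃ A ∈ 𝒜, ∃ B ∈ 𝒜, A ≠ B ∧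
      ∀ p ∈ P, ∀ i < p, #{a ∈ A | a % p = i} = #{a ∈ B | a % p = i} := by
  let counts (A : Finset ℕ) : (Σ p : P, Fin p) → ℕ :=
    fun pi => #{a ∈ A | a % (pi.1 : ℕ) = pi.2}
  have hmaps : ∀ A ∈ 𝒜, counts A ∈ Fintype.piFinset fun _ => range (m + 1) := fun A hA =>
    Fintype.mem_piFinset.2 fun _ =>
      mem_range.2 (Nat.lt_succ_of_le ((card_filter_le _ _).trans (hm A hA)))
  have hlt : #(Fintype.piFinset fun _ : (Σ p : P, Fin p) => range (m + 1)) < #𝒜 := by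
    simpa [Fintype.card_sigma, sum_attach P (fun p => p)] using hcard
  obtain ⟨A, hA, B, hB, hAB, heq⟩ := exists_ne_map_eq_of_card_lt_of_maps_to hlt hmaps
  exact ⟨A, hA, B, hB, hAB, fun p hp i hi => congrFun heq ⟨⟨p, hp⟩, ⟨i, hi⟩⟩⟩

/-- The `i`-th point lies among the first `d` of the block `[2di + 1, 2di + 2d]`, so consecutive
points are at least `d` apart. -/
def blockSet (d : ℕ) {m : ℕ} (g : Fin m → Fin d) : Finset ℕ :=
  univ.image fun i => 2 * d * i + g i + 1

section blockSet

variable {d m : ℕ}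

theorem card_blockSet_le (g : Fin m → Fin d) : #(blockSet d g) ≤ m :=
  card_image_le.trans (by simp)

theorem blockSet_subset_Icc {n : ℕ} (h : 2 * d * m ≤ n) (g : Fin m → Fin d) :
    blockSet d g ⊆ Icc 1 n := by
  intro a ha
  obtain ⟨i, -, rfl⟩ := mem_image.1 ha
  have : 2 * d * (i + 1) ≤ 2 * d * m := Nat.mul_le_mul_left _ i.isLt
  have := (g i).isLt
  rw [mem_Icc]
  constructor <;> nlinarith

theorem isSeparated_blockSet (g : Fin m → Fin d) : IsSeparated d (blockSet d g) := by
  have key (i j : Fin m) (hij : i < j) :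
      (d : ℝ) ≤ ((2 * d * j + g j + 1 : ℕ) : ℝ) - (2 * d * i + g i + 1 : ℕ) := by
    have : 2 * d * (i + 1) ≤ 2 * d * j := Nat.mul_le_mul_left _ hij
    have := (g i).isLt
    rw [le_sub_iff_add_le]
    exact_mod_cast (by nlinarith : d + (2 * d * i + g i + 1) ≤ 2 * d * j + g j + 1)
  intro a ha a' ha' hne
  obtain ⟨i, -, rfl⟩ := mem_image.1 ha
  obtain ⟨j, -, rfl⟩ := mem_image.1 ha'
  rcases lt_trichotomy i j with hij | rfl | hij
  · rw [abs_sub_comm]; exact (key i j hij).trans (le_abs_self _)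
  · exact absurd rfl hne
  · exact (key j i hij).trans (le_abs_self _)

theorem blockSet_injective : Function.Injective (blockSet d (m := m)) := by
  have decode (i : ℕ) (b : Fin d) :
      (2 * d * i + b) / (2 * d) = i ∧ (2 * d * i + b) % (2 * d) = b := by
    have := b.isLt
    exact (Nat.div_mod_unique (by omega)).2 ⟨by ring, by omega⟩
  intro g g' h
  funext i
  have hi : 2 * d * i + g i + 1 ∈ blockSet d g' := h ▸ mem_image_of_mem _ (mem_univ i)
  obtain ⟨j, -, hj⟩ := mem_image.1 hi
  have hj' : 2 * d * j + g' j = 2 * d * i + g i := by omega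
  obtain rfl : j = i := Fin.ext (by rw [← (decode j (g' j)).1, hj', (decode i (g i)).1])
  exact Fin.ext (by rw [← (decode j (g' j)).2, hj', (decode j (g j)).2])

end blockSet

theorem exists_separated_pair_card_filter_mod_eq {n d m : ℕ} (P : Finset ℕ) (hd : 2 ≤ d)
    (hn : 2 * d * m ≤ n) (hmd : m + 1 ≤ d ^ 3) (hP : 3 * ∑ p ∈ P, p < m) :
    ∃ A B : Finset ℕ, A ⊆ Icc 1 n ∧ B ⊆ Icc 1 n ∧ A ≠ B ∧
      IsSeparated d A ∧ IsSeparated d B ∧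
      ∀ p ∈ P, ∀ i < p, #{a ∈ A | a % p = i} = #{a ∈ B | a % p = i} := by
  have hcard : (m + 1) ^ (∑ p ∈ P, p) < #(univ.image (blockSet d (m := m))) := by
    rw [card_image_of_injective _ blockSet_injective, card_univ, Fintype.card_fun,
      Fintype.card_fin, Fintype.card_fin]
    calc (m + 1) ^ (∑ p ∈ P, p) ≤ (d ^ 3) ^ (∑ p ∈ P, p) := Nat.pow_le_pow_left hmd _
      _ = d ^ (3 * ∑ p ∈ P, p) := (pow_mul _ _ _).symm
      _ < d ^ m := Nat.pow_lt_pow_right hd hP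
  have hm : ∀ A ∈ univ.image (blockSet d (m := m)), #A ≤ m := by
    simp only [mem_image, mem_univ, true_and]
    rintro _ ⟨g, rfl⟩
    exact card_blockSet_le g
  obtain ⟨A, hA, B, hB, hAB, hres⟩ := exists_ne_card_filter_mod_eq P hm hcard
  obtain ⟨g, -, rfl⟩ := mem_image.1 hA
  obtain ⟨g', -, rfl⟩ := mem_image.1 hB
  exact ⟨_, _, blockSet_subset_Icc hn g, blockSet_subset_Icc hn g', hAB,
    isSeparated_blockSet g, isSeparated_blockSet g', hres⟩

theorem sum_primesLE_le (K s : ℕ) (hs : 0 < s) :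
    ∑ p ∈ Nat.primesLE K, (p : ℝ) ≤ s ^ 2 + K ^ 2 * log 4 / log (s + 1) := by
  have hlog : 0 < log ((s : ℝ) + 1) := log_pos (by norm_cast; omega)
  rw [← sum_filter_add_sum_filter_not _ (· ≤ s)]
  have hsmall : ∑ p ∈ Nat.primesLE K with p ≤ s, (p : ℝ) ≤ s ^ 2 := by
    have hcard : #{p ∈ Nat.primesLE K | p ≤ s} ≤ s := by
      calc #{p ∈ Nat.primesLE K | p ≤ s} ≤ #(Icc 1 s) := card_le_card fun p hp => by
              simp only [mem_filter, Nat.mem_primesLE] at hp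
              exact mem_Icc.2 ⟨hp.1.2.one_lt.le, hp.2⟩
        _ = s := by simp
    calc ∑ p ∈ Nat.primesLE K with p ≤ s, (p : ℝ)
        ≤ #{p ∈ Nat.primesLE K | p ≤ s} • (s : ℝ) :=
          sum_le_card_nsmul _ _ _ fun p hp => by exact_mod_cast (mem_filter.1 hp).2
      _ ≤ s ^ 2 := by
          rw [nsmul_eq_mul, sq]
          gcongr
  -- each prime above `s` contributes at least `log (s + 1)` to `θ K ≤ K log 4`
  have hcount : #{p ∈ Nat.primesLE K | ¬p ≤ s} * log (s + 1) ≤ K * log 4 := by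
    calc #{p ∈ Nat.primesLE K | ¬p ≤ s} * log ((s : ℝ) + 1)
        = ∑ p ∈ Nat.primesLE K with ¬p ≤ s, log ((s : ℝ) + 1) := by simp
      _ ≤ ∑ p ∈ Nat.primesLE K with ¬p ≤ s, log (p : ℝ) :=
          sum_le_sum fun p hp => log_le_log (by positivity) (by
            have := (mem_filter.1 hp).2; exact_mod_cast (by omega : s + 1 ≤ p))
      _ ≤ ∑ p ∈ Nat.primesLE K, log (p : ℝ) :=
          sum_le_sum_of_subset_of_nonneg (filter_subset _ _) fun p hp _ =>
            log_nonneg (by exact_mod_cast (Nat.prime_of_mem_primesLE hp).one_lt.le)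
      _ = Chebyshev.theta K := (Chebyshev.theta_eq_sum_primesLE_log K).symm
      _ ≤ K * log 4 := by
          rw [mul_comm]; exact Chebyshev.theta_le_log4_mul_x (Nat.cast_nonneg K)
  have hlarge :
      ∑ p ∈ Nat.primesLE K with ¬p ≤ s, (p : ℝ) ≤ K ^ 2 * log 4 / log (s + 1) := by
    calc ∑ p ∈ Nat.primesLE K with ¬p ≤ s, (p : ℝ)
        ≤ #{p ∈ Nat.primesLE K | ¬p ≤ s} • (K : ℝ) :=
          sum_le_card_nsmul _ _ _ fun p hp => by
            exact_mod_cast Nat.le_of_mem_primesLE (mem_filter.1 hp).1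
      _ ≤ K ^ 2 * log 4 / log (s + 1) := by
          rw [nsmul_eq_mul, le_div_iff₀ hlog]
          nlinarith [(Nat.cast_nonneg K : (0 : ℝ) ≤ K)]
  linarith

theorem sum_primesLE_le_add {x : ℝ} (hx : 1 < x) (K : ℕ) :
    ∑ p ∈ Nat.primesLE K, (p : ℝ) ≤ x + 2 * K ^ 2 * log 4 / log x := by
  set s := ⌊√x⌋₊
  have hs : 1 ≤ s := Nat.le_floor (by simpa using one_le_sqrt.2 hx.le)
  have hs2 : (s : ℝ) ^ 2 ≤ x := by
    calc (s : ℝ) ^ 2 ≤ √x ^ 2 := by gcongr; exact Nat.floor_le (sqrt_nonneg x)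
      _ = x := sq_sqrt (by linarith)
  have hlogx : 0 < log x := log_pos hx
  have hlogs : log x / 2 ≤ log (s + 1) := by
    calc log x / 2 = log √x := by rw [log_sqrt (by linarith)]
      _ ≤ log (s + 1) := log_le_log (by positivity) (Nat.lt_floor_add_one _).le
  calc ∑ p ∈ Nat.primesLE K, (p : ℝ) ≤ s ^ 2 + K ^ 2 * log 4 / log (s + 1) :=
        sum_primesLE_le K s hs
    _ ≤ x + K ^ 2 * log 4 / (log x / 2) := by gcongr
    _ = x + 2 * K ^ 2 * log 4 / log x := by field_simp

theorem three_mul_sum_primesLE_lt {n K : ℕ} {x : ℝ} (hx : 100 ≤ x) (hn : (n : ℝ) = x ^ 3)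
    (hK : (K : ℝ) ≤ x * √(log n) / 10) :
    3 * ∑ p ∈ Nat.primesLE K, p < n / (2 * ⌈x⌉₊) := by
  have hlogx : 0 < log x := log_pos (by linarith)
  have hlogn : log n = 3 * log x := by rw [hn, log_pow]; norm_num
  have hK2 : (K : ℝ) ^ 2 ≤ 3 * x ^ 2 * log x / 100 := by
    calc (K : ℝ) ^ 2 ≤ (x * √(log n) / 10) ^ 2 := by gcongr
      _ = 3 * x ^ 2 * log x / 100 := by
        rw [div_pow, mul_pow, sq_sqrt (by rw [hlogn]; positivity), hlogn]; ring
  have hlog4 : log 4 < 1.4 := by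
    rw [show (4 : ℝ) = 2 ^ 2 by norm_num, log_pow]; norm_num; linarith [log_two_lt_d9]
  have hS : ∑ p ∈ Nat.primesLE K, (p : ℝ) ≤ x + x ^ 2 / 10 := by
    calc ∑ p ∈ Nat.primesLE K, (p : ℝ) ≤ x + 2 * K ^ 2 * log 4 / log x :=
          sum_primesLE_le_add (by linarith) K
      _ ≤ x + 2 * (3 * x ^ 2 * log x / 100) * log 4 / log x := by gcongr
      _ = x + 6 * log 4 * x ^ 2 / 100 := by field_simp; ring
      _ ≤ x + x ^ 2 / 10 := by nlinarith
  set m := n / (2 * ⌈x⌉₊)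
  have hm : (n : ℝ) < 2 * ⌈x⌉₊ * (m + 1) := by
    exact_mod_cast Nat.lt_mul_div_succ n (by positivity)
  have hd : (⌈x⌉₊ : ℝ) < x + 1 := Nat.ceil_lt_add_one (by linarith)
  rw [← Nat.cast_lt (α := ℝ)]
  push_cast
  by_contra! hle
  have : x ^ 3 < 2 * (x + 1) * (3 * (x + x ^ 2 / 10) + 1) := by
    calc x ^ 3 < 2 * ⌈x⌉₊ * (m + 1) := hn ▸ hm
      _ ≤ 2 * (x + 1) * (3 * (x + x ^ 2 / 10) + 1) := by gcongr; linarith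
  nlinarith

theorem rpow_one_third_pow_three (n : ℕ) : ((n : ℝ) ^ ((1 : ℝ) / 3)) ^ 3 = n := by
  rw [← rpow_natCast, ← rpow_mul (Nat.cast_nonneg n)]; norm_num

theorem stmt15 : ∃ c : ℝ, 0 < c ∧ ∃ N : ℕ, ∀ n : ℕ, N ≤ n → ∃ A B : Finset ℕ,
    A ⊆ Finset.Icc 1 n ∧ B ⊆ Finset.Icc 1 n ∧ A ≠ B ∧
    (∀ a ∈ A, ∀ a' ∈ A, a ≠ a' → (n : ℝ) ^ ((1 : ℝ) / 3) ≤ |(a : ℝ) - (a' : ℝ)|) ∧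
    (∀ b ∈ B, ∀ b' ∈ B, b ≠ b' → (n : ℝ) ^ ((1 : ℝ) / 3) ≤ |(b : ℝ) - (b' : ℝ)|) ∧
    ∀ p : ℕ, Nat.Prime p → (p : ℝ) ≤ c * (n : ℝ) ^ ((1 : ℝ) / 3) * Real.sqrt (Real.log n) →
      ∀ i < p, (A.filter (fun a => a % p = i)).card = (B.filter (fun a => a % p = i)).card := by
  refine ⟨1 / 10, by norm_num, 10 ^ 6, fun n hn => ?_⟩
  set x := (n : ℝ) ^ ((1 : ℝ) / 3)
  have hx3 : (n : ℝ) = x ^ 3 := (rpow_one_third_pow_three n).symm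
  have hx : 100 ≤ x := by
    by_contra! hx
    have : x ^ 3 < 100 ^ 3 := pow_lt_pow_left₀ hx (by positivity) (by norm_num)
    have : (10 ^ 6 : ℝ) ≤ n := by exact_mod_cast hn
    linarith
  set d := ⌈x⌉₊
  have hd : 2 ≤ d := by exact_mod_cast (by linarith [Nat.le_ceil x] : (2 : ℝ) ≤ d)
  have hnd : n ≤ d ^ 3 := by
    have : (n : ℝ) ≤ (d : ℝ) ^ 3 :=
      hx3 ▸ pow_le_pow_left₀ (by positivity) (Nat.le_ceil x) 3
    exact_mod_cast this
  have hmn : n / (2 * d) < n := Nat.div_lt_self (by omega) (by omega)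
  obtain ⟨A, B, hA, hB, hAB, hAsep, hBsep, hres⟩ :=
    exists_separated_pair_card_filter_mod_eq (Nat.primesLE ⌊x * √(log n) / 10⌋₊) hd
      (Nat.mul_div_le n (2 * d)) (by omega)
      (three_mul_sum_primesLE_lt hx hx3 (Nat.floor_le (by positivity)))
  refine ⟨A, B, hA, hB, hAB, IsSeparated.mono hAsep (Nat.le_ceil x),
    IsSeparated.mono hBsep (Nat.le_ceil x),
    fun p hp hpc i hi => hres p (Nat.mem_primesLE.2 ⟨Nat.le_floor ?_, hp⟩) i hi⟩
  linarith
end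

section
/- Let m, n, l, q be positive integers with l ≤ m and q prime, let i ∈ {0,...,m−1}, a ∈ {0,...,q−1}, and let w ∈ {0,1}^l. Then there exists a deterministic finite automaton with at most 2·m·q states that accepts a string x ∈ {0,1}^n if and only if the number of positions j with j ≡ i (mod m) at which w occurs as a contiguous substring of x starting at position j is congruent to a modulo q. -/
/-! After reading a prefix `y`, the automaton stores the phase `(|y| - i) mod m`, which is the
offset of the last letter inside the latest window starting at a position `≡ i (mod m)`, the
number of occurrences completed so far modulo `q`, and one bit recording whether that window still
agrees with the corresponding prefix of `w`. Since `|w| ≤ m`, two windows starting at positions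
`≡ i (mod m)` never overlap, so one bit suffices and the states are `ZMod m × ZMod q × Bool`. -/

open Finset

theorem List.concat_suffix_concat_iff {α : Type*} {u y : List α} {a b : α} :
    u ++ [a] <:+ y ++ [b] ↔ u <:+ y ∧ a = b := by
  simp [List.suffix_concat_iff, and_comm]

theorem List.take_drop_eq_iff_suffix_take {α : Type*} {y w : List α} {k : ℕ}
    (hk : k + w.length ≤ y.length) :
    (y.drop k).take w.length = w ↔ w <:+ y.take (k + w.length) := by
  rw [List.suffix_iff_eq_drop, List.length_take, min_eq_left hk, Nat.add_sub_cancel,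
    List.drop_take, Nat.add_sub_cancel_left, eq_comm]

theorem List.add_length_le_of_take_drop_eq {α : Type*} {y w : List α} {k : ℕ}
    (hw : 0 < w.length) (h : (y.drop k).take w.length = w) : k + w.length ≤ y.length := by
  have := congrArg List.length h
  rw [List.length_take, List.length_drop] at this
  omega

theorem ZMod.val_add_one_of_ne_zero {n : ℕ} [NeZero n] {p : ZMod n} (h : (p + 1).val ≠ 0) :
    (p + 1).val = p.val + 1 := by
  have hval : (p + 1).val = (p.val + 1) % n := by
    rw [← ZMod.val_natCast, Nat.cast_succ, ZMod.natCast_zmod_val]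
  rcases Nat.lt_or_eq_of_le (ZMod.val_lt p) with hlt | heq
  · rw [hval, Nat.mod_eq_of_lt hlt]
  · rw [Nat.succ_eq_add_one] at heq
    rw [hval, heq, Nat.mod_self] at h
    contradiction

theorem DFA.eval_eq_of_append_singleton {α σ : Type*} (M : DFA α σ) (f : List α → σ)
    (hstart : M.start = f []) (hstep : ∀ y c, f (y ++ [c]) = M.step (f y) c) (y : List α) :
    M.eval y = f y := by
  induction y using List.reverseRecOn with
  | nil => exact hstart
  | append_singleton y c ih => rw [DFA.eval_append_singleton, ih, hstep]

namespace OccurrenceDFA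

variable {α : Type*}

section PartialMatch

variable (m i : ℕ) (w : List α)

def phase (y : List α) : ZMod m := y.length - i

def IsPartialMatch (y : List α) : Prop :=
  (phase m i y).val < w.length ∧ w.take ((phase m i y).val + 1) <:+ y

variable {m i w}

theorem phase_append_singleton (y : List α) (c : α) :
    phase m i (y ++ [c]) = phase m i y + 1 := by
  simp only [phase, List.length_append, List.length_singleton]
  push_cast
  ring

theorem isPartialMatch_append_singleton [NeZero m] (y : List α) (c : α) :
    IsPartialMatch m i w (y ++ [c]) ↔
      ((phase m i (y ++ [c])).val = 0 ∨ IsPartialMatch m i w y) ∧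
        w[(phase m i (y ++ [c])).val]? = some c := by
  set k := (phase m i (y ++ [c])).val with hk
  change k < w.length ∧ w.take (k + 1) <:+ y ++ [c] ↔ _
  rcases lt_or_ge k w.length with hlt | hge
  · have hprev : w.take k <:+ y ↔ k = 0 ∨ IsPartialMatch m i w y := by
      rcases eq_or_ne k 0 with h0 | h0
      · simp [h0]
      · have hk' : k = (phase m i y).val + 1 := by
          rw [hk, phase_append_singleton] at h0 ⊢
          exact ZMod.val_add_one_of_ne_zero h0
        simp only [IsPartialMatch, h0, false_or, ← hk']
        exact (and_iff_right (by omega)).symm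
    rw [List.getElem?_eq_getElem hlt, Option.some_inj, ← List.take_concat_get' w k hlt,
      List.concat_suffix_concat_iff, hprev]
    tauto
  · exact iff_of_false (fun h => (Nat.not_lt.mpr hge) h.1) (by simp [List.getElem?_eq_none hge])

theorem add_one_sub_mod_eq_iff_val [NeZero m] (hi : i < m) {l t : ℕ} (hl : 0 < l)
    (hlm : l ≤ m) (hlt : l ≤ t) :
    (t + 1 - l) % m = i ↔ ((t : ZMod m) - i).val = l - 1 := by
  calc (t + 1 - l) % m = i ↔ ((t + 1 - l : ℕ) : ZMod m) = i := by
        rw [ZMod.natCast_eq_natCast_iff', Nat.mod_eq_of_lt hi]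
    _ ↔ (t : ZMod m) - i = ((l - 1 : ℕ) : ZMod m) := by
        push_cast [Nat.cast_sub (by omega : l ≤ t + 1), Nat.cast_sub hl]
        constructor <;> intro h <;> linear_combination h
    _ ↔ _ := by rw [← (ZMod.val_injective m).eq_iff, ZMod.val_cast_of_lt (by omega)]

theorem suffix_and_mod_eq_iff [NeZero m] (hl : 0 < w.length) (hlm : w.length ≤ m) (hi : i < m)
    (y : List α) :
    (w <:+ y ∧ (y.length + 1 - w.length) % m = i) ↔
      (phase m i y).val + 1 = w.length ∧ IsPartialMatch m i w y := by
  have hmatch (h : (phase m i y).val + 1 = w.length) : IsPartialMatch m i w y ↔ w <:+ y := by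
    rw [IsPartialMatch, h, List.take_length]
    exact and_iff_right (by omega)
  have hmod (hsuf : w <:+ y) := add_one_sub_mod_eq_iff_val hi hl hlm hsuf.length_le
  constructor
  · rintro ⟨hsuf, hstart⟩
    have hlast : (phase m i y).val + 1 = w.length := by
      rw [phase, (hmod hsuf).mp hstart]
      omega
    exact ⟨hlast, (hmatch hlast).mpr hsuf⟩
  · rintro ⟨hlast, hpm⟩
    have hsuf := (hmatch hlast).mp hpm
    exact ⟨hsuf, (hmod hsuf).mpr (by rw [← phase]; omega)⟩

end PartialMatch

variable [DecidableEq α] (m i : ℕ) (w : List α)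

-- Occurrences are indexed by their end `e`, so that they start at position `e + 1 - w.length`.
def occCount (y : List α) : ℕ :=
  #{e ∈ range (y.length + 1) | w <:+ y.take e ∧ (e + 1 - w.length) % m = i}

instance : DecidablePred (IsPartialMatch m i w) := fun _ => inferInstanceAs (Decidable (_ ∧ _))

def occState (q : ℕ) (y : List α) : ZMod m × ZMod q × Bool :=
  (phase m i y, occCount m i w y, decide (IsPartialMatch m i w y))

def occStep (q : ℕ) (s : ZMod m × ZMod q × Bool) (c : α) : ZMod m × ZMod q × Bool :=
  let p := s.1 + 1
  let b := (decide (p.val = 0) || s.2.2) && decide (w[p.val]? = some c)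
  (p, if p.val + 1 = w.length ∧ b then s.2.1 + 1 else s.2.1, b)

def occDFA (q a : ℕ) : DFA α (ZMod m × ZMod q × Bool) where
  step := occStep m w q
  start := occState m i w q []
  accept := {s | s.2.1 = a}

variable {m i w}

theorem occCount_append_singleton (y : List α) (c : α) :
    occCount m i w (y ++ [c]) = occCount m i w y +
      if w <:+ y ++ [c] ∧ ((y ++ [c]).length + 1 - w.length) % m = i then 1 else 0 := by
  have hprefix : ∀ e ∈ range (y.length + 1), (y ++ [c]).take e = y.take e := fun e he =>
    List.take_append_of_le_length (Nat.lt_succ_iff.mp (mem_range.mp he))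
  rw [occCount, occCount, List.length_append, List.length_singleton, range_add_one,
    filter_insert, List.take_of_length_le (by simp), filter_congr fun e he => by rw [hprefix e he]]
  split_ifs
  · exact card_insert_of_notMem (by simp)
  · rfl

theorem occState_append_singleton [NeZero m] (hl : 0 < w.length) (hlm : w.length ≤ m)
    (hi : i < m) (q : ℕ) (y : List α) (c : α) :
    occState m i w q (y ++ [c]) = occStep m w q (occState m i w q y) c := by
  have hflag : ((decide ((phase m i (y ++ [c])).val = 0) || decide (IsPartialMatch m i w y)) &&
      decide (w[(phase m i (y ++ [c])).val]? = some c)) =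
        decide (IsPartialMatch m i w (y ++ [c])) := by
    simp only [isPartialMatch_append_singleton, Bool.decide_and, Bool.decide_or]
  simp only [occState, occStep, ← phase_append_singleton y c, hflag, occCount_append_singleton,
    suffix_and_mod_eq_iff hl hlm hi (y ++ [c]), decide_eq_true_eq]
  split_ifs <;> simp

theorem eval_occDFA [NeZero m] (hl : 0 < w.length) (hlm : w.length ≤ m) (hi : i < m)
    (q a : ℕ) (y : List α) : (occDFA m i w q a).eval y = occState m i w q y :=
  DFA.eval_eq_of_append_singleton _ _ rfl (occState_append_singleton hl hlm hi q) y

theorem mem_accepts_occDFA [NeZero m] (hl : 0 < w.length) (hlm : w.length ≤ m)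
    (hi : i < m) {a : ℕ} (ha : a < q) (y : List α) :
    y ∈ (occDFA m i w q a).accepts ↔ occCount m i w y % q = a := by
  rw [DFA.mem_accepts, eval_occDFA hl hlm hi]
  exact (ZMod.natCast_eq_natCast_iff' _ _ _).trans (by rw [Nat.mod_eq_of_lt ha])

theorem card_filter_window_eq_occCount (hl : 0 < w.length) (y : List α) :
    #{j ∈ Icc 1 (y.length - w.length + 1) | (y.drop (j - 1)).take w.length = w ∧ j % m = i} =
      occCount m i w y := by
  have hend {e : ℕ} (he : w <:+ y.take e) : w.length ≤ e :=
    he.length_le.trans (List.length_take_le _ _)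
  refine card_nbij' (fun j => j - 1 + w.length) (fun e => e + 1 - w.length) ?_ ?_ ?_ ?_
  · intro j hj
    simp only [coe_filter, Set.mem_ofPred_eq, mem_Icc, mem_range] at hj ⊢
    obtain ⟨⟨hj1, -⟩, hwin, hmod⟩ := hj
    have hlen := List.add_length_le_of_take_drop_eq hl hwin
    refine ⟨by omega, (List.take_drop_eq_iff_suffix_take hlen).mp hwin, ?_⟩
    rwa [show j - 1 + w.length + 1 - w.length = j by omega]
  · intro e he
    simp only [coe_filter, Set.mem_ofPred_eq, mem_Icc, mem_range] at he ⊢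
    obtain ⟨he, hsuf, hmod⟩ := he
    have hle := hend hsuf
    refine ⟨⟨by omega, by omega⟩, ?_, hmod⟩
    rw [show e + 1 - w.length - 1 = e - w.length by omega,
      List.take_drop_eq_iff_suffix_take (by omega), Nat.sub_add_cancel hle]
    exact hsuf
  · intro j hj
    simp only [coe_filter, Set.mem_ofPred_eq, mem_Icc] at hj
    change j - 1 + w.length + 1 - w.length = j
    omega
  · intro e he
    simp only [coe_filter, Set.mem_ofPred_eq] at he
    have := hend he.2.1
    change e + 1 - w.length - 1 + w.length = e
    omega

end OccurrenceDFA

theorem stmt18_general (m n l q : ℕ) (hl : 0 < l) (hlm : l ≤ m)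
    (i a : ℕ) (hi : i < m) (ha : a < q) (w : List Bool) (hw : w.length = l) :
    ∃ (σ : Type) (_ : Fintype σ) (M : DFA Bool σ), Fintype.card σ ≤ 2 * m * q ∧
      ∀ x : List Bool, x.length = n →
        (x ∈ M.accepts ↔
          ((Finset.Icc 1 (n - l + 1)).filter
              (fun j => (x.drop (j - 1)).take l = w ∧ j % m = i)).card % q = a) := by
  subst hw
  have : NeZero m := ⟨by omega⟩
  have : NeZero q := ⟨by omega⟩
  refine ⟨_, inferInstance, OccurrenceDFA.occDFA m i w q a, ?_, fun x hx => ?_⟩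
  · simp only [Fintype.card_prod, ZMod.card, Fintype.card_bool]
    exact le_of_eq (by ring)
  · subst hx
    rw [OccurrenceDFA.card_filter_window_eq_occCount hl,
      OccurrenceDFA.mem_accepts_occDFA hl hlm hi ha]

theorem stmt18 (m n l q : ℕ) (hm : 0 < m) (hn : 0 < n) (hl : 0 < l) (hlm : l ≤ m)
    (hq : q.Prime) (i a : ℕ) (hi : i < m) (ha : a < q) (w : List Bool) (hw : w.length = l) :
    ∃ (σ : Type) (_ : Fintype σ) (M : DFA Bool σ), Fintype.card σ ≤ 2 * m * q ∧
      ∀ x : List Bool, x.length = n →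
        (x ∈ M.accepts ↔
          ((Finset.Icc 1 (n - l + 1)).filter
              (fun j => (x.drop (j - 1)).take l = w ∧ j % m = i)).card % q = a) :=
  stmt18_general m n l q hl hlm i a hi ha w hw
end
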